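/- arXiv:2511.11026 — 2 statements merged into one kernel-verified Lean document; each statement's English description precedes it below -/
import Mathlib

section
/- Under the same hypotheses (V positive definite C¹ with V(0)=0, Ω_c compact, V̇ < 0 on Ω_c \ {0}), every solution of ẋ = f(x) starting in Ω_c converges to the origin as t → ∞. -/
/-!
The orbital derivative `V̇ y = fderiv ℝ V y (f y)` is `≤ 0` on `Ω_c` (at the origin because `0`
minimises `V` on the open set `D`) and `< 0` on the level set `V = c`, so by continuous induction a
trajectory starting in `Ω_c` stays there and `V` decreases along it. If `V (x t)` stayed above some
`m > 0`, the trajectory would lie in the compact set `Ω_c ∩ {V ≥ m}`, where `V̇ ≤ -δ < 0`, and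
`V (x t) ≤ V (x 0) - δ t` would become negative. Hence `V (x t) → 0`, and since `V` is continuous
on the compact set `Ω_c` and vanishes there only at the origin, `x t → 0`.
-/

open Set Filter Topology

theorem mapsTo_Ici_of_forall_mem_nhdsGT {X : Type*} [TopologicalSpace X] {Ω : Set X}
    {x : ℝ → X} {a : ℝ} (hΩ : IsClosed Ω) (hx : ContinuousOn x (Ici a)) (ha : x a ∈ Ω)
    (hstep : ∀ t ∈ Ici a, x t ∈ Ω → x ⁻¹' Ω ∈ 𝓝[>] t) : MapsTo x (Ici a) Ω := by
  intro t ht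
  have hclosed : IsClosed (x ⁻¹' Ω ∩ Icc a t) := by
    rw [inter_comm]
    exact (hx.mono Icc_subset_Ici_self).preimage_isClosed_of_isClosed isClosed_Icc hΩ
  exact hclosed.Icc_subset_of_forall_mem_nhdsWithin ha (fun s hs ↦ hstep s hs.2.1 hs.1)
    ⟨ht, le_rfl⟩

theorem HasDerivAt.eventually_nhdsGT_lt {g : ℝ → ℝ} {g' t : ℝ} (hg : HasDerivAt g g' t)
    (hg' : g' < 0) : ∀ᶠ s in 𝓝[>] t, g s < g t := by
  filter_upwards [hg.hasDerivWithinAt.limsup_slope_le' (lt_irrefl t) hg', self_mem_nhdsWithin]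
    with s hslope hts
  exact (slope_neg_iff_of_le (le_of_lt hts)).1 hslope

theorem sub_le_mul_sub_of_hasDerivAt_le {g g' : ℝ → ℝ} {a C : ℝ}
    (hg : ∀ t ∈ Ici a, HasDerivAt g (g' t) t) (hg' : ∀ t ∈ Ici a, g' t ≤ C) {t : ℝ}
    (ht : a ≤ t) : g t - g a ≤ C * (t - a) := by
  have hint : ∀ s ∈ interior (Ici a), s ∈ Ici a := fun _ hs ↦ interior_subset hs
  refine (convex_Ici a).image_sub_le_mul_sub_of_deriv_le
    (fun s hs ↦ (hg s hs).continuousAt.continuousWithinAt)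
    (fun s hs ↦ (hg s (hint s hs)).differentiableAt.differentiableWithinAt)
    (fun s hs ↦ ?_) a self_mem_Ici t ht ht
  rw [(hg s (hint s hs)).deriv]
  exact hg' s (hint s hs)

theorem tendsto_nhds_of_tendsto_comp_nhds_zero {X ι : Type*} [MetricSpace X] {K : Set X}
    {V : X → ℝ} {a : X} (hK : IsCompact K) (hV : ContinuousOn V K)
    (hpos : ∀ y ∈ K, y ≠ a → 0 < V y) {u : ι → X} {l : Filter ι} (hu : ∀ᶠ i in l, u i ∈ K)
    (hVu : Tendsto (V ∘ u) l (𝓝 0)) : Tendsto u l (𝓝 a) := by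
  refine Metric.tendsto_nhds.2 fun ε hε ↦ ?_
  have hKε : IsCompact (K ∩ {y | ε ≤ dist y a}) :=
    hK.inter_right (isClosed_le continuous_const (continuous_id.dist continuous_const))
  obtain ⟨m, hm, hVm⟩ := hKε.exists_forall_le' (hV.mono inter_subset_left)
    fun y hy ↦ hpos y hy.1 (dist_pos.1 (hε.trans_le (show ε ≤ dist y a from hy.2)))
  filter_upwards [hu, hVu.eventually_lt_const hm] with i hi hVi
  by_contra! h
  exact (hVm (u i) ⟨hi, h⟩).not_gt hVi

section Lyapunov

variable {E : Type*} [NormedAddCommGroup E] [NormedSpace ℝ E] {D : Set E} {V : E → ℝ}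
  {f : E → E} {x : ℝ → E} {c : ℝ}

theorem fderiv_apply_nonpos_of_mem_sublevel (hD : IsOpen D) (hV0 : V 0 = 0)
    (hVpos : ∀ y ∈ D, y ≠ 0 → 0 < V y)
    (hdec : ∀ y ∈ D, V y ≤ c → y ≠ 0 → fderiv ℝ V y (f y) < 0) {y : E}
    (hy : y ∈ {y ∈ D | V y ≤ c}) : fderiv ℝ V y (f y) ≤ 0 := by
  rcases eq_or_ne y 0 with rfl | hy0
  · have hmin : IsMinOn V D 0 := isMinOn_iff.2 fun z hz ↦ by
      rcases eq_or_ne z 0 with rfl | hz0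
      · exact le_rfl
      · exact hV0 ▸ (hVpos z hz hz0).le
    simp [(hmin.isLocalMin (hD.mem_nhds hy.1)).fderiv_eq_zero]
  · exact (hdec y hy.1 hy.2 hy0).le

theorem preimage_sublevel_mem_nhdsGT (hD : IsOpen D) (hV : DifferentiableOn ℝ V D)
    (hV0 : V 0 = 0) (hc : 0 < c)
    (hdec : ∀ y ∈ D, V y ≤ c → y ≠ 0 → fderiv ℝ V y (f y) < 0) {t : ℝ}
    (hx : HasDerivAt x (f (x t)) t) (hxt : x t ∈ {y ∈ D | V y ≤ c}) :
    x ⁻¹' {y ∈ D | V y ≤ c} ∈ 𝓝[>] t := by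
  have hVx : DifferentiableAt ℝ V (x t) := hV.differentiableAt (hD.mem_nhds hxt.1)
  have hmemD : ∀ᶠ s in 𝓝[>] t, x s ∈ D :=
    nhdsWithin_le_nhds (hx.continuousAt.eventually_mem (hD.mem_nhds hxt.1))
  have hle : ∀ᶠ s in 𝓝[>] t, V (x s) ≤ c := by
    rcases eq_or_ne (x t) 0 with hzero | hne
    · have hlt : V (x t) < c := by rwa [hzero, hV0]
      exact nhdsWithin_le_nhds <|
        ((hVx.continuousAt.comp hx.continuousAt).eventually_lt_const hlt).mono fun _ ↦ le_of_lt
    · filter_upwards [(hVx.hasFDerivAt.comp_hasDerivAt t hx).eventually_nhdsGT_lt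
        (hdec _ hxt.1 hxt.2 hne)] with s hs
      exact hs.le.trans hxt.2
  exact hmemD.and hle

theorem exists_comp_lt_of_mapsTo_sublevel (hD : IsOpen D) (hV : ContDiffOn ℝ 1 V D)
    (hf : ContinuousOn f D) (hV0 : V 0 = 0)
    (hdec : ∀ y ∈ D, V y ≤ c → y ≠ 0 → fderiv ℝ V y (f y) < 0)
    (hcomp : IsCompact {y ∈ D | V y ≤ c})
    (hV' : ∀ t ∈ Ici (0 : ℝ), HasDerivAt (V ∘ x) (fderiv ℝ V (x t) (f (x t))) t)
    (hmaps : MapsTo x (Ici 0) {y ∈ D | V y ≤ c}) {m : ℝ} (hm : 0 < m) :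
    ∃ T ∈ Ici (0 : ℝ), V (x T) < m := by
  by_contra! hbound
  set K := {y ∈ D | V y ≤ c} ∩ V ⁻¹' Ici m
  have hK : IsCompact K := hcomp.of_isClosed_subset
    ((hV.continuousOn.mono fun _ hy ↦ hy.1).preimage_isClosed_of_isClosed hcomp.isClosed
      isClosed_Ici) inter_subset_left
  have hcont : ContinuousOn (fun y ↦ fderiv ℝ V y (f y)) D :=
    (hV.continuousOn_fderiv_of_isOpen hD le_rfl).clm_apply hf
  obtain ⟨δ, hδ, hδK⟩ := hK.exists_forall_le' (hcont.mono fun _ hy ↦ hy.1.1).neg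
    fun y hy ↦ neg_pos.2 <| hdec y hy.1.1 hy.1.2 <|
      ne_of_apply_ne V <| hV0 ▸ (hm.trans_le hy.2).ne'
  set t := V (x 0) / δ
  have ht : 0 ≤ t := div_nonneg (hm.le.trans (hbound 0 self_mem_Ici)) hδ.le
  have hdecay : V (x t) - V (x 0) ≤ -δ * (t - 0) := sub_le_mul_sub_of_hasDerivAt_le hV'
    (fun s hs ↦ le_neg.1 (hδK (x s) ⟨hmaps hs, hbound s hs⟩)) ht
  have hδt : δ * t = V (x 0) := mul_div_cancel₀ _ hδ.ne'
  linarith [hbound t ht]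

theorem tendsto_comp_atTop_nhds_zero (hD : IsOpen D) (hV : ContDiffOn ℝ 1 V D)
    (hf : ContinuousOn f D) (hV0 : V 0 = 0) (hVpos : ∀ y ∈ D, y ≠ 0 → 0 < V y)
    (hdec : ∀ y ∈ D, V y ≤ c → y ≠ 0 → fderiv ℝ V y (f y) < 0)
    (hcomp : IsCompact {y ∈ D | V y ≤ c})
    (hV' : ∀ t ∈ Ici (0 : ℝ), HasDerivAt (V ∘ x) (fderiv ℝ V (x t) (f (x t))) t)
    (hmaps : MapsTo x (Ici 0) {y ∈ D | V y ≤ c}) :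
    Tendsto (V ∘ x) atTop (𝓝 0) := by
  have hanti : ∀ T ∈ Ici (0 : ℝ), ∀ t ≥ T, V (x t) ≤ V (x T) := fun T hT t ht ↦ by
    have : V (x t) - V (x T) ≤ 0 * (t - T) :=
      sub_le_mul_sub_of_hasDerivAt_le (fun s hs ↦ hV' s (mem_Ici.2 (hT.trans hs)))
        (fun s hs ↦ fderiv_apply_nonpos_of_mem_sublevel hD hV0 hVpos hdec
          (hmaps (mem_Ici.2 (hT.trans hs)))) ht
    linarith
  have hnonneg : ∀ t ∈ Ici (0 : ℝ), 0 ≤ V (x t) := fun t ht ↦ by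
    rcases eq_or_ne (x t) 0 with h | h
    · rw [h, hV0]
    · exact (hVpos _ (hmaps ht).1 h).le
  refine tendsto_order.2 ⟨fun a ha ↦ eventually_atTop.2 ⟨0, fun t ht ↦ ha.trans_le
    (hnonneg t ht)⟩, fun m hm ↦ ?_⟩
  obtain ⟨T, hT, hVT⟩ := exists_comp_lt_of_mapsTo_sublevel hD hV hf hV0 hdec hcomp hV' hmaps hm
  exact eventually_atTop.2 ⟨T, fun t ht ↦ (hanti T hT t ht).trans_lt hVT⟩

end Lyapunov

theorem sublevel_solutions_tendsto_zero_general {n : ℕ}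
    (D : Set (EuclideanSpace ℝ (Fin n))) (hD : IsOpen D)
    (V : EuclideanSpace ℝ (Fin n) → ℝ) (hV : ContDiffOn ℝ 1 V D)
    (hV0 : V 0 = 0) (hVpos : ∀ x ∈ D, x ≠ 0 → 0 < V x)
    (f : EuclideanSpace ℝ (Fin n) → EuclideanSpace ℝ (Fin n))
    (hf : ∀ x ∈ D, ∃ K : NNReal, ∃ U ∈ nhds x, LipschitzOnWith K f U)
    (c : ℝ) (hc : 0 < c)
    (hcomp : IsCompact {x ∈ D | V x ≤ c})
    (hdec : ∀ x ∈ D, V x ≤ c → x ≠ 0 → fderiv ℝ V x (f x) < 0) :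
    ∀ x : ℝ → EuclideanSpace ℝ (Fin n),
      (∀ t ∈ Ici (0 : ℝ), HasDerivAt x (f (x t)) t) →
      x 0 ∈ {y ∈ D | V y ≤ c} →
      Filter.Tendsto x Filter.atTop (nhds 0) := by
  intro x hx hx0
  have hVd : DifferentiableOn ℝ V D := hV.differentiableOn one_ne_zero
  have hfc : ContinuousOn f D := fun y hy ↦ by
    obtain ⟨K, U, hU, hlip⟩ := hf y hy
    exact (hlip.continuousOn.continuousAt hU).continuousWithinAt
  have hmaps : MapsTo x (Ici 0) {y ∈ D | V y ≤ c} :=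
    mapsTo_Ici_of_forall_mem_nhdsGT hcomp.isClosed
      (fun t ht ↦ (hx t ht).continuousAt.continuousWithinAt) hx0
      fun t ht hxt ↦ preimage_sublevel_mem_nhdsGT hD hVd hV0 hc hdec (hx t ht) hxt
  have hV' : ∀ t ∈ Ici (0 : ℝ), HasDerivAt (V ∘ x) (fderiv ℝ V (x t) (f (x t))) t :=
    fun t ht ↦ (hVd.differentiableAt (hD.mem_nhds (hmaps ht).1)).hasFDerivAt.comp_hasDerivAt t
      (hx t ht)
  exact tendsto_nhds_of_tendsto_comp_nhds_zero hcomp (hVd.continuousOn.mono fun _ hy ↦ hy.1)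
    (fun y hy ↦ hVpos y hy.1) (eventually_atTop.2 ⟨0, fun _ ht ↦ hmaps ht⟩)
    (tendsto_comp_atTop_nhds_zero hD hV hfc hV0 hVpos hdec hcomp hV' hmaps)

/-- Every solution starting in the compact sublevel set `Ω_c` converges to the origin. -/
theorem sublevel_solutions_tendsto_zero {n : ℕ}
    (D : Set (EuclideanSpace ℝ (Fin n))) (hD : IsOpen D)
    (h0 : (0 : EuclideanSpace ℝ (Fin n)) ∈ D)
    (V : EuclideanSpace ℝ (Fin n) → ℝ) (hV : ContDiffOn ℝ 1 V D)
    (hV0 : V 0 = 0) (hVpos : ∀ x ∈ D, x ≠ 0 → 0 < V x)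
    (f : EuclideanSpace ℝ (Fin n) → EuclideanSpace ℝ (Fin n))
    (hf : ∀ x ∈ D, ∃ K : NNReal, ∃ U ∈ nhds x, LipschitzOnWith K f U)
    (hf0 : f 0 = 0)
    (c : ℝ) (hc : 0 < c)
    (hcomp : IsCompact {x ∈ D | V x ≤ c})
    (hdec : ∀ x ∈ D, V x ≤ c → x ≠ 0 → fderiv ℝ V x (f x) < 0) :
    ∀ x : ℝ → EuclideanSpace ℝ (Fin n),
      (∀ t ∈ Ici (0 : ℝ), HasDerivAt x (f (x t)) t) →
      x 0 ∈ {y ∈ D | V y ≤ c} →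
      Filter.Tendsto x Filter.atTop (nhds 0) :=
  sublevel_solutions_tendsto_zero_general D hD V hV hV0 hVpos f hf c hc hcomp hdec
end

section
/- Let φ(x) = W₂ tanh(W₁x + b₁) with scalar output, V(x) = (φ(x) − φ(0))² + xᵀPx with P symmetric, and f: ℝⁿ → ℝⁿ C¹ with f(0)=0 and Jacobian A at 0. Then the derivative of V along f satisfies V̇(x) = 2xᵀ(W₁ᵀDW₂ᵀW₂DW₁ + P)Ax + ρ(x), where D = diag(1 − tanh²(b₁)) and ρ(x)/‖x‖² → 0 as x → 0. -/
/-!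
With `M` the self-adjoint operator of `P`, `V x = (φ x - φ 0)² + ⟪x, M x⟫`, so
`V̇ x = 2 ((φ x - φ 0) · Dφ(x) (f x) + ⟪x, M (f x)⟫)`. Each term is a bounded bilinear expression
whose two factors are `O(‖x‖)` and agree with their linearizations (`Dφ(0) x`, `Dφ(0) (A x)`,
`x`, `M (A x)`) up to `o(‖x‖)`; for `Dφ(x) (f x)` this is where the continuity of `Dφ` at `0`
enters. Replacing both factors by their linearizations therefore costs only `o(‖x‖²)`. Finally
`Dφ(0) = W₂ D W₁` by the chain rule and `tanh' = 1 - tanh²`, which is `L`.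
-/

open Asymptotics Filter Topology Matrix WithLp
open scoped RealInnerProductSpace

namespace Real

theorem hasDerivAt_tanh (x : ℝ) : HasDerivAt tanh (1 - tanh x ^ 2) x := by
  have hcosh : cosh x ≠ 0 := (cosh_pos x).ne'
  rw [show tanh = sinh / cosh from funext tanh_eq_sinh_div_cosh]
  refine ((hasDerivAt_sinh x).div (hasDerivAt_cosh x) hcosh).congr_deriv ?_
  rw [Pi.div_apply]
  field_simp

theorem contDiff_tanh {k : WithTop ℕ∞} : ContDiff ℝ k tanh := by
  rw [show tanh = fun y => sinh y / cosh y from funext tanh_eq_sinh_div_cosh]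
  exact contDiff_sinh.div contDiff_cosh fun x => (cosh_pos x).ne'

end Real

section TanhLayer

variable {ι : Type*} [Fintype ι]

theorem hasFDerivAt_tanh_add [DecidableEq ι] (b : ι → ℝ) (y : EuclideanSpace ℝ ι) :
    HasFDerivAt (fun y : EuclideanSpace ℝ ι => toLp 2 fun i => Real.tanh (y i + b i))
      (toEuclideanCLM (n := ι) (𝕜 := ℝ) (diagonal fun i => 1 - Real.tanh (y i + b i) ^ 2)) y := by
  rw [← hasFDerivWithinAt_univ, hasFDerivWithinAt_piLp]
  intro i
  rw [hasFDerivWithinAt_univ]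
  refine ((Real.hasDerivAt_tanh _).comp_hasFDerivAt y
    ((PiLp.hasFDerivAt_apply (𝕜 := ℝ) 2 y i).add_const (b i))).congr_fderiv ?_
  ext v
  simp [mulVec_diagonal]

theorem contDiff_tanh_add {k : WithTop ℕ∞} (b : ι → ℝ) :
    ContDiff ℝ k (fun y : EuclideanSpace ℝ ι => toLp 2 fun i => Real.tanh (y i + b i)) :=
  contDiff_piLp' _ fun _ => Real.contDiff_tanh.comp ((contDiff_piLp_apply 2).add contDiff_const)

variable {E F : Type*} [NormedAddCommGroup E] [NormedSpace ℝ E] [NormedAddCommGroup F]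
  [NormedSpace ℝ F]

theorem hasFDerivAt_tanh_layer [DecidableEq ι] (W₁ : E →L[ℝ] EuclideanSpace ℝ ι)
    (W₂ : EuclideanSpace ℝ ι →L[ℝ] F) (b : ι → ℝ) (x : E) :
    HasFDerivAt (fun x => W₂ (toLp 2 fun i => Real.tanh (W₁ x i + b i)))
      (W₂ ∘L toEuclideanCLM (n := ι) (𝕜 := ℝ)
        (diagonal fun i => 1 - Real.tanh (W₁ x i + b i) ^ 2) ∘L W₁) x :=
  W₂.hasFDerivAt.comp x ((hasFDerivAt_tanh_add b (W₁ x)).comp x W₁.hasFDerivAt)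

theorem fderiv_tanh_layer_zero_apply (W₁ : E →L[ℝ] EuclideanSpace ℝ ι)
    (W₂ : EuclideanSpace ℝ ι →L[ℝ] F) (b : ι → ℝ) (v : E) :
    fderiv ℝ (fun x => W₂ (toLp 2 fun i => Real.tanh (W₁ x i + b i))) 0 v
      = W₂ (toLp 2 fun i => (1 - Real.tanh (b i) ^ 2) * W₁ v i) := by
  classical
  rw [(hasFDerivAt_tanh_layer W₁ W₂ b 0).fderiv, ContinuousLinearMap.comp_apply,
    ContinuousLinearMap.comp_apply]
  congr 1
  ext i
  simp [mulVec_diagonal]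

theorem contDiff_tanh_layer {k : WithTop ℕ∞} (W₁ : E →L[ℝ] EuclideanSpace ℝ ι)
    (W₂ : EuclideanSpace ℝ ι →L[ℝ] F) (b : ι → ℝ) :
    ContDiff ℝ k (fun x => W₂ (toLp 2 fun i => Real.tanh (W₁ x i + b i))) :=
  W₂.contDiff.comp ((contDiff_tanh_add b).comp W₁.contDiff)

end TanhLayer

section Bilinear

variable {𝕜 α E F G : Type*} [NontriviallyNormedField 𝕜]
  [SeminormedAddCommGroup E] [NormedSpace 𝕜 E] [SeminormedAddCommGroup F] [NormedSpace 𝕜 F]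
  [SeminormedAddCommGroup G] [NormedSpace 𝕜 G]

theorem ContinuousLinearMap.isLittleO_apply₂_sub_apply₂ (B : E →L[𝕜] F →L[𝕜] G) {l : Filter α}
    {a a₀ : α → E} {b b₀ : α → F} {k₁ k₂ : α → ℝ}
    (ha : (fun x => a x - a₀ x) =o[l] k₁) (hb : (fun x => b x - b₀ x) =o[l] k₂)
    (ha₀ : a₀ =O[l] k₁) (hb₀ : b₀ =O[l] k₂) :
    (fun x => B (a x) (b x) - B (a₀ x) (b₀ x)) =o[l] fun x => k₁ x * k₂ x := by
  have hb' : b =O[l] k₂ := (hb.isBigO.add hb₀).congr_left fun x => sub_add_cancel (b x) (b₀ x)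
  have hsplit : ∀ x, B (a x) (b x) - B (a₀ x) (b₀ x)
      = B (a x - a₀ x) (b x) + B (a₀ x) (b x - b₀ x) := fun x => by
    simp only [map_sub, _root_.sub_apply]
    abel
  simp only [hsplit]
  exact (B.isBoundedBilinearMap.isBigO_comp.trans_isLittleO
      (ha.norm_left.mul_isBigO hb'.norm_left)).add
    (B.isBoundedBilinearMap.isBigO_comp.trans_isLittleO
      (ha₀.norm_left.mul_isLittleO hb.norm_left))

end Bilinear

section Linearization

variable {E : Type*} [NormedAddCommGroup E] [NormedSpace ℝ E]

theorem isLittleO_fderiv_apply_comp_sub {φ : E → ℝ} (hφ' : ContinuousAt (fderiv ℝ φ) 0)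
    {f : E → E} {A : E →L[ℝ] E} (hf : HasFDerivAt f A 0) (hf0 : f 0 = 0) :
    (fun x => fderiv ℝ φ x (f x) - fderiv ℝ φ 0 (A x)) =o[𝓝 0] fun x => ‖x‖ := by
  have hφ'o : (fun x => fderiv ℝ φ x - fderiv ℝ φ 0) =o[𝓝 0] fun _ => (1 : ℝ) :=
    (isLittleO_one_iff ℝ).2 (tendsto_sub_nhds_zero_iff.2 hφ')
  have hfA : (fun x => f x - A x) =o[𝓝 0] fun x => ‖x‖ := by
    simpa [hf0] using hf.isLittleO.norm_right
  simpa using (ContinuousLinearMap.id ℝ (E →L[ℝ] ℝ)).isLittleO_apply₂_sub_apply₂ hφ'o hfA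
    (isBigO_const_one ℝ _ _) (A.isBigO_id _).norm_right

theorem isLittleO_sub_mul_fderiv_apply_comp_sub {φ : E → ℝ} (hφ : DifferentiableAt ℝ φ 0)
    (hφ' : ContinuousAt (fderiv ℝ φ) 0) {f : E → E} {A : E →L[ℝ] E} (hf : HasFDerivAt f A 0)
    (hf0 : f 0 = 0) :
    (fun x => (φ x - φ 0) * fderiv ℝ φ x (f x) - fderiv ℝ φ 0 x * fderiv ℝ φ 0 (A x))
      =o[𝓝 0] fun x => ‖x‖ * ‖x‖ := by
  have hφo : (fun x => φ x - φ 0 - fderiv ℝ φ 0 x) =o[𝓝 0] fun x => ‖x‖ := by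
    simpa using hφ.hasFDerivAt.isLittleO.norm_right
  exact (ContinuousLinearMap.mul ℝ ℝ).isLittleO_apply₂_sub_apply₂ hφo
    (isLittleO_fderiv_apply_comp_sub hφ' hf hf0) ((fderiv ℝ φ 0).isBigO_id _).norm_right
    ((fderiv ℝ φ 0).isBigO_comp _ _ |>.trans (A.isBigO_id _).norm_right)

end Linearization

theorem Matrix.inner_toEuclideanCLM_apply {ι : Type*} [Fintype ι] [DecidableEq ι]
    (P : Matrix ι ι ℝ) (x v : EuclideanSpace ℝ ι) :
    ⟪x, toEuclideanCLM (n := ι) (𝕜 := ℝ) P v⟫ = ∑ i, ∑ j, x i * P i j * v j := by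
  simp only [PiLp.inner_apply, ofLp_toEuclideanCLM, mulVec, dotProduct, Finset.sum_mul,
    RCLike.inner_apply, conj_trivial]
  exact Finset.sum_congr rfl fun i _ => Finset.sum_congr rfl fun j _ => by ring

section InnerProduct

variable {E : Type*} [NormedAddCommGroup E] [InnerProductSpace ℝ E]

theorem isLittleO_inner_comp_sub (T : E →L[ℝ] E) {f : E → E} {A : E →L[ℝ] E}
    (hf : HasFDerivAt f A 0) (hf0 : f 0 = 0) :
    (fun x => ⟪x, T (f x)⟫ - ⟪x, T (A x)⟫) =o[𝓝 0] fun x => ‖x‖ * ‖x‖ := by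
  have hfA : (fun x => T (f x) - T (A x)) =o[𝓝 0] fun x => ‖x‖ := by
    simpa [hf0] using (T.isBigO_comp _ _).trans_isLittleO hf.isLittleO.norm_right
  exact (innerSL ℝ).isLittleO_apply₂_sub_apply₂ (a := id) (a₀ := id)
    ((isLittleO_zero _ _).congr_left fun x => (sub_self x).symm) hfA (isBigO_refl _ _).norm_right
    ((T.isBigO_comp _ _).trans (A.isBigO_id _).norm_right)

theorem fderiv_sq_sub_add_reApplyInnerSelf_apply {φ : E → ℝ} {x : E}
    (hφ : DifferentiableAt ℝ φ x) (c : ℝ) {T : E →L[ℝ] E} (hT : (T : E →ₗ[ℝ] E).IsSymmetric)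
    (v : E) :
    fderiv ℝ (fun y => (φ y - c) ^ 2 + T.reApplyInnerSelf y) x v
      = 2 * ((φ x - c) * fderiv ℝ φ x v + ⟪x, T v⟫) := by
  rw [((hφ.hasFDerivAt.sub_const c).pow 2 |>.fun_add
    (hT.hasStrictFDerivAt_reApplyInnerSelf x).hasFDerivAt).fderiv]
  simp only [Nat.add_one_sub_one, pow_one, nsmul_eq_mul, Nat.cast_ofNat, _root_.add_apply,
    _root_.smul_apply, smul_eq_mul, coe_innerSL_apply, hT.apply_clm x v]
  ring

end InnerProduct

/-- Decomposition of `V̇` into its quadratic part, governed by the linearizations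
of `φ` and `f` at the origin, plus a superquadratic remainder. -/
theorem Vdot_quadratic_decomposition {n N : ℕ}
    (W₁ : EuclideanSpace ℝ (Fin n) →L[ℝ] EuclideanSpace ℝ (Fin N))
    (W₂ : EuclideanSpace ℝ (Fin N) →L[ℝ] ℝ) (b₁ : Fin N → ℝ)
    (φ : EuclideanSpace ℝ (Fin n) → ℝ)
    (hφ : ∀ x, φ x = W₂ (WithLp.toLp 2 (fun i => Real.tanh (W₁ x i + b₁ i)) : EuclideanSpace ℝ (Fin N)))
    (P : Matrix (Fin n) (Fin n) ℝ) (hP : P.IsSymm)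
    (V : EuclideanSpace ℝ (Fin n) → ℝ)
    (hV : ∀ x, V x = (φ x - φ 0) ^ 2 + ∑ i, ∑ j, x i * P i j * x j)
    (f : EuclideanSpace ℝ (Fin n) → EuclideanSpace ℝ (Fin n))
    (hf : ContDiff ℝ 1 f) (hf0 : f 0 = 0)
    (L : EuclideanSpace ℝ (Fin n) → ℝ)
    (hL : ∀ x, L x = W₂ (WithLp.toLp 2 (fun i => (1 - Real.tanh (b₁ i) ^ 2) * W₁ x i) :
        EuclideanSpace ℝ (Fin N))) :
    ∃ ρ : EuclideanSpace ℝ (Fin n) → ℝ,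
      (∀ x, fderiv ℝ V x (f x)
          = 2 * (L x * L (fderiv ℝ f 0 x)
              + ∑ i, ∑ j, x i * P i j * fderiv ℝ f 0 x j) + ρ x) ∧
      Filter.Tendsto (fun x => ρ x / ‖x‖ ^ 2) (nhdsWithin 0 {0}ᶜ) (nhds 0) := by
  set M := toEuclideanCLM (n := Fin n) (𝕜 := ℝ) P
  have hM : (M : EuclideanSpace ℝ (Fin n) →ₗ[ℝ] EuclideanSpace ℝ (Fin n)).IsSymmetric :=
    isSymmetric_toEuclideanLin_iff.2 (isHermitian_iff_isSymm.2 hP)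
  have hQ : ∀ x v, ⟪x, M v⟫ = ∑ i, ∑ j, x i * P i j * v j := Matrix.inner_toEuclideanCLM_apply P
  have hφC : ContDiff ℝ 1 φ := funext hφ ▸ contDiff_tanh_layer W₁ W₂ b₁
  have hL' : ∀ v, L v = fderiv ℝ φ 0 v := fun v => by
    rw [hL, funext hφ, fderiv_tanh_layer_zero_apply]
  have hVdot : ∀ x,
      fderiv ℝ V x (f x) = 2 * ((φ x - φ 0) * fderiv ℝ φ x (f x) + ⟪x, M (f x)⟫) := by
    have hVeq : V = fun x => (φ x - φ 0) ^ 2 + M.reApplyInnerSelf x := funext fun x => by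
      rw [hV, M.reApplyInnerSelf_apply, RCLike.re_to_real, real_inner_comm, hQ]
    intro x
    rw [hVeq]
    exact fderiv_sq_sub_add_reApplyInnerSelf_apply (hφC.differentiable one_ne_zero x) _ hM _
  set A := fderiv ℝ f 0
  have hA : HasFDerivAt f A 0 := (hf.differentiable one_ne_zero 0).hasFDerivAt
  refine ⟨fun x => fderiv ℝ V x (f x) - 2 * (L x * L (A x) + ∑ i, ∑ j, x i * P i j * A x j),
    fun x => by ring, ?_⟩
  have hρ := ((isLittleO_sub_mul_fderiv_apply_comp_sub (hφC.differentiable one_ne_zero 0)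
    (hφC.continuous_fderiv one_ne_zero).continuousAt hA hf0).add
    (isLittleO_inner_comp_sub M hA hf0)).const_mul_left 2
  simp only [sq]
  refine (hρ.congr_left fun x => ?_).tendsto_div_nhds_zero.mono_left nhdsWithin_le_nhds
  simp only [hVdot, hL', hQ]
  ring
end
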